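/- For all positive integers s and t with t ≥ s, the weight function W satisfies s·t·C(s,t) < 3·W(s,t) and W(s,t) ≤ s·t·C(s,t); that is, s/3 < W(s,t)/(t·C(s,t)) ≤ s. -/

import Mathlib

/-- The function `C` of Füredi and Hajnal, defined for positive integers `s, t`:
`C(1,t) = 1`, `C(s,1) = 2` for `s > 1`, and `C(s,t) = C(s,t-1) * C(s-1, C(s,t-1))` for `s, t > 1`.
(The value at arguments equal to `0` is junk.) -/
def C : ℕ → ℕ → ℕ
  | 0, _ => 0
  | 1, _ => 1
  | _+2, 0 => 0
  | _+2, 1 => 2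
  | s+2, t+2 => C (s+2) (t+1) * C (s+1) (C (s+2) (t+1))
termination_by s t => (s, t)

/-- The weight `W(s,t) = |M(s,t)|` of the pattern-avoiding matrices of Füredi and Hajnal:
`W(1,t) = t`, `W(s,1) = 2` for `s > 1`, and
`W(s,t) = C(s,t) + C(s-1,C(s,t-1)) * W(s,t-1) + W(s-1,C(s,t-1))` for `s, t > 1`.
(The value at arguments equal to `0` is junk.) -/
def W : ℕ → ℕ → ℕ
  | 0, _ => 0
  | 1, t => t
  | _+2, 0 => 0
  | _+2, 1 => 2
  | s+2, t+2 =>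
      C (s+2) (t+2) + C (s+1) (C (s+2) (t+1)) * W (s+2) (t+1) + W (s+1) (C (s+2) (t+1))
termination_by s t => (s, t)

/-!
Both bounds follow by induction on `(s, t)` along the recursion of `W`. The upper bound is
inherited term by term. The lower bound needs the stronger invariant
`3 W(s,t) ≥ ((s + 2) t + 2 - 2 s) C(s,t)`, which is exact for `s = 1`; its inductive step
uses `C(s,t) ≥ s` for `t ≥ 2`. Since `(s + 2) t + 2 - 2 s = s t + 2 (t - s) + 2`, the
invariant exceeds `s t C(s,t)` as soon as `t ≥ s`.
-/

@[simp] lemma C_one_left (t : ℕ) : C 1 t = 1 := by simp [C]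

@[simp] lemma C_add_two_one (s : ℕ) : C (s + 2) 1 = 2 := by simp [C]

lemma C_add_two_add_two (s t : ℕ) :
    C (s + 2) (t + 2) = C (s + 2) (t + 1) * C (s + 1) (C (s + 2) (t + 1)) := by
  rw [C]

@[simp] lemma W_one_left (t : ℕ) : W 1 t = t := by simp [W]

@[simp] lemma W_add_two_one (s : ℕ) : W (s + 2) 1 = 2 := by simp [W]

lemma W_add_two_add_two (s t : ℕ) :
    W (s + 2) (t + 2) = C (s + 2) (t + 2) + C (s + 1) (C (s + 2) (t + 1)) * W (s + 2) (t + 1)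
      + W (s + 1) (C (s + 2) (t + 1)) := by
  rw [W]

lemma C_pos : ∀ {s t : ℕ}, 0 < s → 0 < t → 0 < C s t
  | 1, _, _, _ => by simp
  | _ + 2, 1, _, _ => by simp
  | s + 2, t + 2, _, _ => by
    have hT : 0 < C (s + 2) (t + 1) := C_pos (by omega) (by omega)
    rw [C_add_two_add_two]
    exact Nat.mul_pos hT (C_pos (by omega) hT)
termination_by s t => (s, t)

lemma C_le_succ_right : ∀ {s t : ℕ}, 0 < s → 0 < t → C s t ≤ C s (t + 1)
  | 1, _, _, _ => by simp
  | s + 2, t + 1, _, _ => by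
    rw [C_add_two_add_two]
    exact Nat.le_mul_of_pos_right _ (C_pos (by omega) (C_pos (by omega) (by omega)))

lemma C_mono_right {s t u : ℕ} (hs : 0 < s) (ht : 0 < t) (htu : t ≤ u) : C s t ≤ C s u := by
  induction u, htu using Nat.le_induction with
  | base => rfl
  | succ u htu ih => exact ih.trans (C_le_succ_right hs (by omega))

lemma C_two_right (s : ℕ) : C (s + 1) 2 = 2 ^ s := by
  induction s with
  | zero => simp
  | succ s ih => rw [C_add_two_add_two, C_add_two_one, ih, pow_succ']

lemma le_C {s t : ℕ} (ht : 2 ≤ t) : s ≤ C s t := by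
  rcases s with _ | s
  · exact Nat.zero_le _
  · calc s + 1 ≤ 2 ^ s := Nat.lt_two_pow_self
      _ = C (s + 1) 2 := (C_two_right s).symm
      _ ≤ C (s + 1) t := C_mono_right s.succ_pos two_pos ht

lemma W_le : ∀ {s t : ℕ}, 0 < s → 0 < t → W s t ≤ s * (t * C s t)
  | 1, t, _, _ => by simp
  | _ + 2, 1, _, _ => by simp
  | s + 2, t + 2, _, _ => by
    have hT : 0 < C (s + 2) (t + 1) := C_pos (by omega) (by omega)
    have ih₁ := W_le (s := s + 2) (t := t + 1) (by omega) (by omega)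
    have ih₂ := W_le (s := s + 1) (by omega) hT
    rw [W_add_two_add_two, C_add_two_add_two]
    set T := C (s + 2) (t + 1)
    set c := C (s + 1) T
    calc T * c + c * W (s + 2) (t + 1) + W (s + 1) T
        ≤ T * c + c * ((s + 2) * ((t + 1) * T)) + (s + 1) * (T * c) := by gcongr
      _ = (s + 2) * ((t + 2) * (T * c)) := by ring
termination_by s t => (s, t)

lemma mul_C_le_three_mul_W :
    ∀ {s t : ℕ}, 0 < s → 0 < t → ((s + 2) * t + 2) * C s t ≤ 3 * W s t + 2 * s * C s t
  | 1, t, _, _ => by simp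
  | s + 2, 1, _, _ => by simp only [C_add_two_one, W_add_two_one]; omega
  | s + 2, 2, _, _ => by
    rw [W_add_two_add_two, C_add_two_add_two, C_add_two_one, W_add_two_one]
    nlinarith
  | s + 2, t + 3, _, _ => by
    have hT : s + 2 ≤ C (s + 2) (t + 2) := le_C (by omega)
    have ih₁ := mul_C_le_three_mul_W (s := s + 2) (t := t + 2) (by omega) (by omega)
    have ih₂ := mul_C_le_three_mul_W (s := s + 1) (t := C (s + 2) (t + 2)) (by omega) (by omega)
    rw [W_add_two_add_two, C_add_two_add_two]
    set T := C (s + 2) (t + 2)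
    set c := C (s + 1) T
    -- `c * ih₁ + ih₂` yields the goal up to the slack `2 c (T - s)`, nonnegative by `hT`.
    nlinarith [Nat.mul_le_mul_right c ih₁, Nat.mul_le_mul_right c hT]
termination_by s t => (s, t)

/-- Lemma (weight): for all positive integers `s` and `t` with `t ≥ s`,
`s/3 < W(s,t)/(t * C(s,t)) ≤ s`, i.e. `s * t * C(s,t) < 3 * W(s,t)` and
`W(s,t) ≤ s * t * C(s,t)`. -/
theorem weight_bounds (s t : ℕ) (hs : 0 < s) (hts : s ≤ t) :
    s * (t * C s t) < 3 * W s t ∧ W s t ≤ s * (t * C s t) := by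
  have ht : 0 < t := hs.trans_le hts
  refine ⟨?_, W_le hs ht⟩
  have key := mul_C_le_three_mul_W hs ht
  nlinarith [C_pos hs ht, Nat.mul_le_mul_right (C s t) hts]
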